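/- arXiv:1207.2496 — 2 statements merged into one kernel-verified Lean document; each statement's English description precedes it below -/
import Mathlib

section
/- For every real number q ≥ 1 and all real numbers u and v, the inequality (|u|^{q−1}u − |v|^{q−1}v)(u − v) ≥ 2^{1−q} |u − v|^{q+1} holds. -/
open Real

private lemma rpow_mul_self (q : ℝ) (hq : 0 < q) {x : ℝ} (hx : 0 ≤ x) :
    x ^ (q - 1) * x = x ^ q := by
  rcases eq_or_lt_of_le hx with h | h
  · simp [← h, Real.zero_rpow hq.ne']
  · nth_rewrite 2 [← Real.rpow_one x]
    rw [← Real.rpow_add h]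
    norm_num

private lemma rpow_add_one_eq (q : ℝ) (hq : 0 < q) {x : ℝ} (hx : 0 ≤ x) :
    x ^ (q + 1) = x ^ q * x := by
  have := rpow_mul_self (q + 1) (by linarith) hx
  simpa using this.symm

private lemma aux_superadd {q : ℝ} (hq : 1 ≤ q) {a b : ℝ} (ha : 0 ≤ a) (hb : 0 ≤ b) :
    a ^ q + b ^ q ≤ (a + b) ^ q := by
  have h := NNReal.coe_le_coe.2
    (NNReal.add_rpow_le_rpow_add a.toNNReal b.toNNReal hq)
  push_cast at h
  rwa [Real.coe_toNNReal a ha, Real.coe_toNNReal b hb] at h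

private lemma aux_conv {q : ℝ} (hq : 1 ≤ q) {a b : ℝ} (ha : 0 ≤ a) (hb : 0 ≤ b) :
    2 ^ (1 - q) * (a + b) ^ q ≤ a ^ q + b ^ q := by
  have h := NNReal.coe_le_coe.2
    (NNReal.rpow_add_le_mul_rpow_add_rpow a.toNNReal b.toNNReal hq)
  push_cast at h
  rw [Real.coe_toNNReal a ha, Real.coe_toNNReal b hb] at h
  have h2 : (0:ℝ) < 2 ^ (1 - q) := by positivity
  have key : 2 ^ (1 - q) * (2:ℝ) ^ (q - 1) = 1 := by
    rw [← Real.rpow_add (by norm_num : (0:ℝ) < 2)]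
    norm_num
  calc 2 ^ (1 - q) * (a + b) ^ q
      ≤ 2 ^ (1 - q) * (2 ^ (q - 1) * (a ^ q + b ^ q)) :=
        mul_le_mul_of_nonneg_left h h2.le
    _ = (2 ^ (1 - q) * (2:ℝ) ^ (q - 1)) * (a ^ q + b ^ q) := by ring
    _ = a ^ q + b ^ q := by rw [key, one_mul]

private lemma core (q : ℝ) (hq : 1 ≤ q) (u v : ℝ) (huv : v ≤ u) (hsum : 0 ≤ u + v) :
    (2 : ℝ) ^ (1 - q) * |u - v| ^ (q + 1) ≤
      (|u| ^ (q - 1) * u - |v| ^ (q - 1) * v) * (u - v) := by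
  have hqpos : (0:ℝ) < q := by linarith
  have hu : 0 ≤ u := by linarith
  have hd : 0 ≤ u - v := by linarith
  rw [abs_of_nonneg hu, abs_of_nonneg hd, rpow_mul_self q hqpos hu,
    rpow_add_one_eq q hqpos hd]
  rcases le_or_gt 0 v with hv | hv
  · rw [abs_of_nonneg hv, rpow_mul_self q hqpos hv]
    have h1 : (2:ℝ) ^ (1 - q) ≤ 1 :=
      Real.rpow_le_one_of_one_le_of_nonpos (by norm_num) (by linarith)
    have h2 : v ^ q + (u - v) ^ q ≤ u ^ q := by
      have := aux_superadd hq hv hd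
      rwa [add_sub_cancel] at this
    have h3 : 0 ≤ (u - v) ^ q := Real.rpow_nonneg hd q
    have h4 : 2 ^ (1 - q) * (u - v) ^ q ≤ u ^ q - v ^ q := by nlinarith
    calc 2 ^ (1 - q) * ((u - v) ^ q * (u - v))
        = (2 ^ (1 - q) * (u - v) ^ q) * (u - v) := by ring
      _ ≤ (u ^ q - v ^ q) * (u - v) := mul_le_mul_of_nonneg_right h4 hd
  · rw [abs_of_neg hv]
    have hw : 0 ≤ -v := by linarith
    have e1 : (-v) ^ (q - 1) * v = -((-v) ^ q) := by
      have := rpow_mul_self q hqpos hw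
      nlinarith [this]
    rw [e1]
    have h4 : 2 ^ (1 - q) * (u - v) ^ q ≤ u ^ q + (-v) ^ q := by
      have := aux_conv hq hu hw
      have e2 : u + -v = u - v := by ring
      rwa [e2] at this
    calc 2 ^ (1 - q) * ((u - v) ^ q * (u - v))
        = (2 ^ (1 - q) * (u - v) ^ q) * (u - v) := by ring
      _ ≤ (u ^ q + (-v) ^ q) * (u - v) := mul_le_mul_of_nonneg_right h4 hd
      _ = (u ^ q - -((-v) ^ q)) * (u - v) := by ring

private lemma half (q : ℝ) (hq : 1 ≤ q) (u v : ℝ) (huv : v ≤ u) :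
    (2 : ℝ) ^ (1 - q) * |u - v| ^ (q + 1) ≤
      (|u| ^ (q - 1) * u - |v| ^ (q - 1) * v) * (u - v) := by
  rcases le_or_gt 0 (u + v) with hsum | hsum
  · exact core q hq u v huv hsum
  · have h := core q hq (-v) (-u) (by linarith) (by linarith)
    have e1 : (-v) - (-u) = u - v := by ring
    rw [e1, abs_neg, abs_neg] at h
    have e2 : (|u| ^ (q - 1) * u - |v| ^ (q - 1) * v) * (u - v)
        = (|v| ^ (q - 1) * (-v) - |u| ^ (q - 1) * (-u)) * (u - v) := by ring
    rw [e2]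
    exact h

/-- For every real `q ≥ 1` and all real `u, v`, the inequality
`(|u|^{q-1} u - |v|^{q-1} v)(u - v) ≥ 2^{1-q} |u - v|^{q+1}` holds. -/
theorem odd_power_monotonicity (q : ℝ) (hq : 1 ≤ q) (u v : ℝ) :
    (2 : ℝ) ^ (1 - q) * |u - v| ^ (q + 1) ≤
      (|u| ^ (q - 1) * u - |v| ^ (q - 1) * v) * (u - v) := by
  rcases le_total v u with h | h
  · exact half q hq u v h
  · have hh := half q hq v u h
    rw [abs_sub_comm] at hh
    have e : (|u| ^ (q - 1) * u - |v| ^ (q - 1) * v) * (u - v)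
        = (|v| ^ (q - 1) * v - |u| ^ (q - 1) * u) * (v - u) := by ring
    rw [e]
    exact hh
end

section
/- Let n ≥ 1 be a natural number and let 1 < p ≤ 2. Define A : ℝ^n → ℝ^n by A(ξ) = |ξ|^{p−2} ξ for ξ ≠ 0 and A(0) = 0 (so that A_i(ξ) = |ξ|^{p−2} ξ_i are the coefficients of the p-Laplacian operator). Then there exists a positive constant K such that for all ξ¹, ξ² ∈ ℝ^n the α-monotonicity inequality with α = p holds: ( Σ_{i=1}^n (A_i(ξ¹) − A_i(ξ²))² )^{p/2} ≤ K ( Σ_{i=1}^n (ξ¹_i − ξ²_i)(A_i(ξ¹) − A_i(ξ²)) )^{p−1}. -/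
/-- Euclidean norm of a vector in `ℝ^n` (represented as `Fin n → ℝ`). -/
noncomputable def eucNorm (n : ℕ) (g : Fin n → ℝ) : ℝ := Real.sqrt (∑ i, g i ^ 2)

/-- The coefficients of the `p`-Laplacian: `A i ξ = |ξ|^{p-2} ξ_i`, with `A 0 = 0`. -/
noncomputable def pLapCoeff (n : ℕ) (p : ℝ) (ξ : Fin n → ℝ) : Fin n → ℝ :=
  fun i => if ξ = 0 then 0 else eucNorm n ξ ^ (p - 2) * ξ i

/- ### Auxiliary scalar lemmas -/

/-- Tangent line inequality for concave `x ↦ x^q`, `0 < q ≤ 1`. -/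
private lemma bern_tangent {q a b : ℝ} (hq0 : 0 < q) (hq1 : q ≤ 1)
    (ha : 0 < a) (hb : 0 ≤ b) :
    b ^ q ≤ a ^ q + q * a ^ (q - 1) * (b - a) := by
  have h := Real.geom_mean_le_arith_mean2_weighted hq0.le
    (by linarith : (0:ℝ) ≤ 1 - q) hb ha.le (by ring)
  have hZ : (0:ℝ) < a ^ (q - 1) := Real.rpow_pos_of_pos ha _
  have h1 : a ^ (1 - q) * a ^ (q - 1) = 1 := by
    rw [← Real.rpow_add ha]; norm_num
  have h2 : a ^ (q - 1) * a = a ^ q := by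
    nth_rewrite 2 [← Real.rpow_one a]
    rw [← Real.rpow_add ha]; norm_num
  have key := mul_le_mul_of_nonneg_right h hZ.le
  have h3 : b ^ q * (a ^ (1 - q) * a ^ (q - 1)) = b ^ q := by rw [h1, mul_one]
  nlinarith [key, h3, h2]

/-- Lower chord bound: `q (a-b) (a+b)^{q-1} ≤ a^q - b^q` for `b ≤ a`. -/
private lemma chord_lower {q a b : ℝ} (hq0 : 0 < q) (hq1 : q ≤ 1)
    (hb : 0 ≤ b) (hab : b ≤ a) :
    q * (a - b) * (a + b) ^ (q - 1) ≤ a ^ q - b ^ q := by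
  rcases eq_or_lt_of_le (hb.trans hab) with h | h
  · have ha0 : a = 0 := h.symm
    have hb0 : b = 0 := le_antisymm (ha0 ▸ hab) hb
    simp [ha0, hb0]
  · have htan := bern_tangent hq0 hq1 h hb
    have hmono : (a + b) ^ (q - 1) ≤ a ^ (q - 1) :=
      Real.rpow_le_rpow_of_nonpos h (by linarith) (by linarith)
    have hq' : 0 ≤ q * (a - b) := mul_nonneg hq0.le (by linarith)
    nlinarith [mul_le_mul_of_nonneg_left hmono hq']

/-- Upper chord bound: `a^q - b^q ≤ 4 (a-b) (a+b)^{q-1}` for `b ≤ a`. -/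
private lemma chord_upper {q a b : ℝ} (hq0 : 0 < q) (hq1 : q ≤ 1)
    (hb : 0 ≤ b) (hab : b ≤ a) :
    a ^ q - b ^ q ≤ 4 * (a - b) * (a + b) ^ (q - 1) := by
  rcases eq_or_lt_of_le (hb.trans hab) with h | ha
  · have ha0 : a = 0 := h.symm
    have hb0 : b = 0 := le_antisymm (ha0 ▸ hab) hb
    simp [ha0, hb0]
  rcases le_or_gt b (a/2) with hcase | hcase
  · -- b ≤ a/2
    have h2a : (0:ℝ) < 2*a := by linarith
    have hZ : (0:ℝ) < (2*a) ^ (q-1) := Real.rpow_pos_of_pos h2a _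
    have hmono : (2*a) ^ (q-1) ≤ (a+b) ^ (q-1) :=
      Real.rpow_le_rpow_of_nonpos (by linarith) (by linarith) (by linarith)
    have h2aq : (2*a) * (2*a)^(q-1) = (2*a)^q := by
      nth_rewrite 1 [← Real.rpow_one (2*a)]
      rw [← Real.rpow_add h2a]; norm_num
    have haq : a ^ q ≤ (2*a) ^ q := Real.rpow_le_rpow ha.le (by linarith) hq0.le
    have hbq : 0 ≤ b ^ q := Real.rpow_nonneg hb _
    have hhalf : (a/2) * (2*a)^(q-1) ≤ (a-b) * (2*a)^(q-1) :=
      mul_le_mul_of_nonneg_right (by linarith) hZ.le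
    have hmul : 4*(a-b) * (2*a)^(q-1) ≤ 4*(a-b) * (a+b)^(q-1) :=
      mul_le_mul_of_nonneg_left hmono (by linarith)
    nlinarith [hhalf, hmul, h2aq, haq, hbq]
  · -- a/2 < b
    have hb' : 0 < b := by linarith
    have htan := bern_tangent hq0 hq1 hb' ha.le
    have hs : 0 < a + b := by linarith
    have hmono : b ^ (q-1) ≤ ((a+b)/4) ^ (q-1) :=
      Real.rpow_le_rpow_of_nonpos (by linarith) (by linarith) (by linarith)
    have hdiv : ((a+b)/4 : ℝ) ^ (q-1) = (a+b)^(q-1) / 4^(q-1) :=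
      Real.div_rpow (by linarith) (by norm_num) _
    have h4lb : (4:ℝ)^(-1:ℝ) ≤ (4:ℝ)^(q-1) :=
      Real.rpow_le_rpow_of_exponent_le (by norm_num) (by linarith)
    have h4inv : (4:ℝ)^(-1:ℝ) = 1/4 := by
      rw [Real.rpow_neg_one]; norm_num
    have h4pos : (0:ℝ) < (4:ℝ)^(q-1) := Real.rpow_pos_of_pos (by norm_num) _
    have hZs : (0:ℝ) < (a+b)^(q-1) := Real.rpow_pos_of_pos hs _
    have hb4 : b ^ (q-1) ≤ 4 * (a+b)^(q-1) := by
      have hd : (a+b)^(q-1) / 4^(q-1) ≤ (a+b)^(q-1) / (1/4) := by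
        apply div_le_div_of_nonneg_left hZs.le (by norm_num)
        rw [← h4inv]; exact h4lb
      calc b ^ (q-1) ≤ ((a+b)/4) ^ (q-1) := hmono
        _ = (a+b)^(q-1) / 4^(q-1) := hdiv
        _ ≤ (a+b)^(q-1) / (1/4) := hd
        _ = 4 * (a+b)^(q-1) := by ring
    have hW : 0 ≤ (a - b) * b^(q-1) :=
      mul_nonneg (by linarith) (Real.rpow_pos_of_pos hb' _).le
    have hq1' : q * ((a-b) * b^(q-1)) ≤ 1 * ((a-b)*b^(q-1)) :=
      mul_le_mul_of_nonneg_right hq1 hW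
    have hstep : (a-b) * b^(q-1) ≤ (a-b) * (4*(a+b)^(q-1)) :=
      mul_le_mul_of_nonneg_left hb4 (by linarith)
    nlinarith [htan, hq1', hstep]

/-- Subadditivity of `x ↦ x^q` for `0 < q ≤ 1`. -/
private lemma rpow_subadd {q a b : ℝ} (hq0 : 0 < q) (hq1 : q ≤ 1)
    (ha : 0 ≤ a) (hb : 0 ≤ b) : (a + b) ^ q ≤ a ^ q + b ^ q := by
  rcases eq_or_lt_of_le ha with h | ha'
  · simp [← h, Real.zero_rpow hq0.ne']
  rcases eq_or_lt_of_le hb with h | hb'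
  · simp [← h, Real.zero_rpow hq0.ne']
  have hs : 0 < a + b := by linarith
  have h1 : (a+b)^q = (a+b) * (a+b)^(q-1) := by
    conv_lhs => rw [show q = 1 + (q-1) by ring]
    rw [Real.rpow_add hs, Real.rpow_one]
  have h2 : a * (a+b)^(q-1) ≤ a * a^(q-1) :=
    mul_le_mul_of_nonneg_left
      (Real.rpow_le_rpow_of_nonpos ha' (by linarith) (by linarith)) ha
  have h3 : b * (a+b)^(q-1) ≤ b * b^(q-1) :=
    mul_le_mul_of_nonneg_left
      (Real.rpow_le_rpow_of_nonpos hb' (by linarith) (by linarith)) hb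
  have ha2 : a * a^(q-1) = a^q := by
    nth_rewrite 1 [← Real.rpow_one a]
    rw [← Real.rpow_add ha']; norm_num
  have hb2 : b * b^(q-1) = b^q := by
    nth_rewrite 1 [← Real.rpow_one b]
    rw [← Real.rpow_add hb']; norm_num
  nlinarith [h1, h2, h3, ha2, hb2]

/-- Endpoint `t = ab` lower bound (monotonicity form). -/
private lemma Ea_mono {p a b : ℝ} (hp1 : 1 < p) (hp2 : p ≤ 2)
    (ha : 0 ≤ a) (hb : 0 ≤ b) :
    (p-1) * (a-b)^2 * (a+b)^(p-2) ≤ (a-b) * (a^(p-1) - b^(p-1)) := by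
  have hq0 : 0 < p - 1 := by linarith
  have hq1 : p - 1 ≤ 1 := by linarith
  have hexp : p - 1 - 1 = p - 2 := by ring
  rcases le_total b a with h | h
  · have h1 := chord_lower hq0 hq1 hb h
    rw [hexp] at h1
    nlinarith [mul_le_mul_of_nonneg_left h1 (sub_nonneg.2 h)]
  · have h1 := chord_lower hq0 hq1 ha h
    rw [hexp, add_comm b a] at h1
    nlinarith [mul_le_mul_of_nonneg_left h1 (sub_nonneg.2 h)]

/-- Endpoint `t = -ab` lower bound (monotonicity form). -/
private lemma Eb_mono {p a b : ℝ} (hp1 : 1 < p) (hp2 : p ≤ 2)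
    (ha : 0 ≤ a) (hb : 0 ≤ b) :
    (p-1) * (a+b)^2 * (a+b)^(p-2) ≤ (a+b) * (a^(p-1) + b^(p-1)) := by
  have hq0 : 0 < p - 1 := by linarith
  have hq1 : p - 1 ≤ 1 := by linarith
  rcases eq_or_lt_of_le (by linarith [add_nonneg ha hb] : (0:ℝ) ≤ a + b) with h | hs
  · rw [← h]
    have : a = 0 := by linarith [add_nonneg ha hb, h.symm.le]
    nlinarith [Real.rpow_nonneg ha (p-1), Real.rpow_nonneg hb (p-1)]
  · have hsub := rpow_subadd hq0 hq1 ha hb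
    have h1 : (a+b)^(p-1) = (a+b) * (a+b)^(p-2) := by
      conv_lhs => rw [show p - 1 = 1 + (p-2) by ring]
      rw [Real.rpow_add hs, Real.rpow_one]
    have hZ : 0 < (a+b)^(p-2) := Real.rpow_pos_of_pos hs _
    have h2 : (p-1)*((a+b)*((a+b)*(a+b)^(p-2))) ≤ 1*((a+b)*((a+b)*(a+b)^(p-2))) :=
      mul_le_mul_of_nonneg_right (by linarith)
        (mul_nonneg hs.le (mul_nonneg hs.le hZ.le))
    have h3 : (a+b)*(a+b)^(p-1) ≤ (a+b)*(a^(p-1)+b^(p-1)) :=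
      mul_le_mul_of_nonneg_left hsub hs.le
    nlinarith [h1, h2, h3]

/-- Endpoint `t = ab` upper bound (squared form). -/
private lemma Ea_sq {p a b : ℝ} (hp1 : 1 < p) (hp2 : p ≤ 2)
    (ha : 0 ≤ a) (hb : 0 ≤ b) :
    (a^(p-1) - b^(p-1))^2 ≤ 16 * (a-b)^2 * ((a+b)^(p-2))^2 := by
  have hq0 : 0 < p - 1 := by linarith
  have hq1 : p - 1 ≤ 1 := by linarith
  have hexp : p - 1 - 1 = p - 2 := by ring
  rcases le_total b a with h | h
  · have h1 := chord_upper hq0 hq1 hb h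
    rw [hexp] at h1
    have h2 : 0 ≤ a^(p-1) - b^(p-1) :=
      sub_nonneg.2 (Real.rpow_le_rpow hb h hq0.le)
    nlinarith [mul_self_le_mul_self h2 h1]
  · have h1 := chord_upper hq0 hq1 ha h
    rw [hexp, add_comm b a] at h1
    have h2 : 0 ≤ b^(p-1) - a^(p-1) :=
      sub_nonneg.2 (Real.rpow_le_rpow ha h hq0.le)
    nlinarith [mul_self_le_mul_self h2 h1]

/-- Endpoint `t = -ab` upper bound (squared form). -/
private lemma Eb_sq {p a b : ℝ} (hp1 : 1 < p) (hp2 : p ≤ 2)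
    (ha : 0 ≤ a) (hb : 0 ≤ b) :
    (a^(p-1) + b^(p-1))^2 ≤ 16 * (a+b)^2 * ((a+b)^(p-2))^2 := by
  have hq0 : 0 < p - 1 := by linarith
  rcases eq_or_lt_of_le (by linarith [add_nonneg ha hb] : (0:ℝ) ≤ a + b) with h | hs
  · have ha0 : a = 0 := by linarith [h.symm.le]
    have hb0 : b = 0 := by linarith [h.symm.le]
    simp [ha0, hb0, Real.zero_rpow hq0.ne']
  · have h1 : a^(p-1) ≤ (a+b)^(p-1) := Real.rpow_le_rpow ha (by linarith) hq0.le
    have h2 : b^(p-1) ≤ (a+b)^(p-1) := Real.rpow_le_rpow hb (by linarith) hq0.le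
    have h3 : (a+b)^(p-1) = (a+b) * (a+b)^(p-2) := by
      conv_lhs => rw [show p - 1 = 1 + (p-2) by ring]
      rw [Real.rpow_add hs, Real.rpow_one]
    have h4 : 0 ≤ a^(p-1) + b^(p-1) :=
      add_nonneg (Real.rpow_nonneg ha _) (Real.rpow_nonneg hb _)
    have h5 : a^(p-1) + b^(p-1) ≤ 2*((a+b)*(a+b)^(p-2)) := by
      rw [← h3]; linarith
    nlinarith [mul_self_le_mul_self h4 h5]

/-- An affine function nonnegative at both ends of an interval is nonnegative inside. -/
private lemma affine_bound {c d x m : ℝ} (h1 : 0 ≤ c + d * m)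
    (h2 : 0 ≤ c + d * (-m)) (hx1 : -m ≤ x) (hx2 : x ≤ m) :
    0 ≤ c + d * x := by
  rcases le_total 0 d with h | h
  · nlinarith [mul_nonneg h (by linarith : (0:ℝ) ≤ x + m)]
  · nlinarith [mul_nonneg (neg_nonneg.2 h) (by linarith : (0:ℝ) ≤ m - x)]

/-- `x^(p-1) = x^(p-2) * x` for `x ≥ 0`. -/
private lemma rpow_pm1 {p : ℝ} (hp1 : 1 < p) (hp2 : p ≤ 2) {x : ℝ} (hx : 0 ≤ x) :
    x ^ (p-1) = x ^ (p-2) * x := by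
  rcases eq_or_lt_of_le hx with h | h
  · rw [← h, Real.zero_rpow (by intro hc; linarith : p - 1 ≠ 0), mul_zero]
  · conv_lhs => rw [show p - 1 = (p-2) + 1 by ring]
    rw [Real.rpow_add h, Real.rpow_one]

private lemma sq_rpow {x : ℝ} (hx : 0 ≤ x) (y : ℝ) : (x^2)^y = x^(2*y) := by
  rw [← Real.rpow_natCast x 2, ← Real.rpow_mul hx]; norm_num

/-- Core scalar inequality. -/
private lemma main_core {p α β t R : ℝ} (hp1 : 1 < p) (hp2 : p ≤ 2)
    (hα : 0 ≤ α) (hβ : 0 ≤ β) (hs : 0 < α + β) (hR0 : 0 < R)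
    (ht2 : t^2 ≤ (α*β)^2) (hRdef : R = α^2 + β^2 - 2*t) :
    ((α^(p-2))^2*α^2 - 2*(α^(p-2)*β^(p-2))*t + (β^(p-2))^2*β^2) ^ (p/2)
      ≤ ((16:ℝ)^(p/2) * ((p-1)^(p-1))⁻¹) *
        (α^(p-2)*α^2 + β^(p-2)*β^2 - (α^(p-2)+β^(p-2))*t) ^ (p-1) := by
  have hq0 : 0 < p - 1 := by linarith
  have hAnn : 0 ≤ α^(p-2) := Real.rpow_nonneg hα _
  have hBnn : 0 ≤ β^(p-2) := Real.rpow_nonneg hβ _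
  have hSpos : 0 < (α+β)^(p-2) := Real.rpow_pos_of_pos hs _
  have hab : 0 ≤ α*β := mul_nonneg hα hβ
  have htub : t ≤ α*β := by nlinarith [ht2, hab]
  have htlb : -(α*β) ≤ t := by nlinarith [ht2, hab]
  have hAa := rpow_pm1 hp1 hp2 hα
  have hBb := rpow_pm1 hp1 hp2 hβ
  have E2a := Ea_mono hp1 hp2 hα hβ
  have E2b := Eb_mono hp1 hp2 hα hβ
  have E1a := Ea_sq hp1 hp2 hα hβ
  have E1b := Eb_sq hp1 hp2 hα hβ
  rw [hAa, hBb] at E2a E2b E1a E1b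
  -- monotonicity lower bound
  have key2 : (p-1)*R*((α+β)^(p-2))
      ≤ α^(p-2)*α^2 + β^(p-2)*β^2 - (α^(p-2)+β^(p-2))*t := by
    have h1 : 0 ≤ (α^(p-2)*α^2 + β^(p-2)*β^2 - (p-1)*(α^2+β^2)*((α+β)^(p-2)))
        + (-(α^(p-2)+β^(p-2)) + 2*(p-1)*((α+β)^(p-2)))*(α*β) := by
      linarith [E2a]
    have h2 : 0 ≤ (α^(p-2)*α^2 + β^(p-2)*β^2 - (p-1)*(α^2+β^2)*((α+β)^(p-2)))
        + (-(α^(p-2)+β^(p-2)) + 2*(p-1)*((α+β)^(p-2)))*(-(α*β)) := by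
      linarith [E2b]
    have h3 := affine_bound h1 h2 htlb htub
    rw [hRdef]; linarith [h3]
  -- continuity upper bound
  have key1 : (α^(p-2))^2*α^2 - 2*(α^(p-2)*β^(p-2))*t + (β^(p-2))^2*β^2
      ≤ 16*R*((α+β)^(p-2))^2 := by
    have h1 : 0 ≤ (16*(α^2+β^2)*((α+β)^(p-2))^2
          - ((α^(p-2))^2*α^2 + (β^(p-2))^2*β^2))
        + (2*(α^(p-2)*β^(p-2)) - 32*((α+β)^(p-2))^2)*(α*β) := by
      linarith [E1a]
    have h2 : 0 ≤ (16*(α^2+β^2)*((α+β)^(p-2))^2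
          - ((α^(p-2))^2*α^2 + (β^(p-2))^2*β^2))
        + (2*(α^(p-2)*β^(p-2)) - 32*((α+β)^(p-2))^2)*(-(α*β)) := by
      linarith [E1b]
    have h3 := affine_bound h1 h2 htlb htub
    rw [hRdef]; linarith [h3]
  have hD2 : 0 ≤ (α^(p-2))^2*α^2 - 2*(α^(p-2)*β^(p-2))*t + (β^(p-2))^2*β^2 := by
    linarith [sq_nonneg (α^(p-2)*α - β^(p-2)*β),
      mul_nonneg (mul_nonneg hAnn hBnn) (sub_nonneg.2 htub)]
  set r := Real.sqrt R with hrdef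
  have hr0 : 0 < r := Real.sqrt_pos.2 hR0
  have hr2 : r^2 = R := Real.sq_sqrt hR0.le
  have hrs : r ≤ α + β := by nlinarith [hr2, htlb, hr0, hs]
  have hRr : R = r^2 := hr2.symm
  have hM0 : 0 ≤ (p-1)*R*((α+β)^(p-2)) :=
    mul_nonneg (mul_nonneg hq0.le hR0.le) hSpos.le
  have step1 : ((α^(p-2))^2*α^2 - 2*(α^(p-2)*β^(p-2))*t + (β^(p-2))^2*β^2) ^ (p/2)
      ≤ (16*R*((α+β)^(p-2))^2) ^ (p/2) :=
    Real.rpow_le_rpow hD2 key1 (by linarith)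
  have step2 : ((p-1)*R*((α+β)^(p-2))) ^ (p-1)
      ≤ (α^(p-2)*α^2 + β^(p-2)*β^2 - (α^(p-2)+β^(p-2))*t) ^ (p-1) :=
    Real.rpow_le_rpow hM0 key2 hq0.le
  have e1 : (16*R*((α+β)^(p-2))^2) ^ (p/2)
      = 16^(p/2) * (r^p * (α+β)^((p-2)*p)) := by
    rw [Real.mul_rpow (mul_nonneg (by norm_num) hR0.le) (sq_nonneg _),
        Real.mul_rpow (by norm_num) hR0.le, hRr, sq_rpow hr0.le,
        sq_rpow hSpos.le, show 2*(p/2) = p by ring, ← Real.rpow_mul hs.le,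
        mul_assoc]
  have e2 : ((p-1)*R*((α+β)^(p-2))) ^ (p-1)
      = (p-1)^(p-1) * (r^(2*(p-1)) * (α+β)^((p-2)*(p-1))) := by
    rw [Real.mul_rpow (mul_nonneg hq0.le hR0.le) hSpos.le,
        Real.mul_rpow hq0.le hR0.le, hRr, sq_rpow hr0.le,
        ← Real.rpow_mul hs.le, mul_assoc]
  have cmp : r^p * (α+β)^((p-2)*p) ≤ r^(2*(p-1)) * (α+β)^((p-2)*(p-1)) := by
    have h1 : (α+β)^(p-2) ≤ r^(p-2) :=
      Real.rpow_le_rpow_of_nonpos hr0 hrs (by linarith)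
    have h2 : r^(2*(p-1)) = r^p * r^(p-2) := by
      rw [show 2*(p-1) = p + (p-2) by ring, Real.rpow_add hr0]
    have h3 : (α+β)^((p-2)*p) = (α+β)^((p-2)*(p-1)) * (α+β)^(p-2) := by
      rw [show (p-2)*p = (p-2)*(p-1) + (p-2) by ring, Real.rpow_add hs]
    have h4 : 0 ≤ r^p * (α+β)^((p-2)*(p-1)) :=
      mul_nonneg (Real.rpow_nonneg hr0.le _) (Real.rpow_nonneg hs.le _)
    rw [h2, h3]
    linarith [mul_le_mul_of_nonneg_left h1 h4]
  have hKnn : (0:ℝ) ≤ (16:ℝ)^(p/2) * ((p-1)^(p-1))⁻¹ :=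
    mul_nonneg (Real.rpow_nonneg (by norm_num) _)
      (inv_nonneg.2 (Real.rpow_nonneg hq0.le _))
  have hc : ((p-1):ℝ)^(p-1) ≠ 0 := (Real.rpow_pos_of_pos hq0 _).ne'
  calc ((α^(p-2))^2*α^2 - 2*(α^(p-2)*β^(p-2))*t + (β^(p-2))^2*β^2) ^ (p/2)
      ≤ (16*R*((α+β)^(p-2))^2) ^ (p/2) := step1
    _ = 16^(p/2) * (r^p * (α+β)^((p-2)*p)) := e1
    _ ≤ 16^(p/2) * (r^(2*(p-1)) * (α+β)^((p-2)*(p-1))) :=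
        mul_le_mul_of_nonneg_left cmp (Real.rpow_nonneg (by norm_num) _)
    _ = ((16:ℝ)^(p/2) * ((p-1)^(p-1))⁻¹) *
        ((p-1)^(p-1) * (r^(2*(p-1)) * (α+β)^((p-2)*(p-1)))) := by
        rw [mul_assoc, inv_mul_cancel_left₀ hc]
    _ = ((16:ℝ)^(p/2) * ((p-1)^(p-1))⁻¹) * (((p-1)*R*((α+β)^(p-2))) ^ (p-1)) := by
        rw [e2]
    _ ≤ ((16:ℝ)^(p/2) * ((p-1)^(p-1))⁻¹) *
        (α^(p-2)*α^2 + β^(p-2)*β^2 - (α^(p-2)+β^(p-2))*t) ^ (p-1) :=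
        mul_le_mul_of_nonneg_left step2 hKnn

/-- **`α`-monotonicity of the `p`-Laplacian with `α = p`.** For `1 < p ≤ 2` there is a
positive constant `K` such that for all `ξ¹, ξ² ∈ ℝ^n`,
`(Σ_i (A_i(ξ¹) - A_i(ξ²))²)^{p/2} ≤ K (Σ_i (ξ¹_i - ξ²_i)(A_i(ξ¹) - A_i(ξ²)))^{p-1}`. -/
theorem pLaplacian_alpha_monotonicity (n : ℕ) (hn : 1 ≤ n) (p : ℝ)
    (hp1 : 1 < p) (hp2 : p ≤ 2) :
    ∃ K : ℝ, 0 < K ∧ ∀ ξ1 ξ2 : Fin n → ℝ,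
      (∑ i, (pLapCoeff n p ξ1 i - pLapCoeff n p ξ2 i) ^ 2) ^ (p / 2) ≤
        K * (∑ i, (ξ1 i - ξ2 i) * (pLapCoeff n p ξ1 i - pLapCoeff n p ξ2 i)) ^ (p - 1) := by
  have hq0 : 0 < p - 1 := by linarith
  refine ⟨(16:ℝ)^(p/2) * ((p-1)^(p-1))⁻¹,
    mul_pos (Real.rpow_pos_of_pos (by norm_num) _)
      (inv_pos.2 (Real.rpow_pos_of_pos hq0 _)), ?_⟩
  intro ξ1 ξ2
  by_cases hne : ξ1 = ξ2
  · subst hne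
    have h1 : (∑ i, (pLapCoeff n p ξ1 i - pLapCoeff n p ξ1 i)^2) = (0:ℝ) := by simp
    have h2 : (∑ i, (ξ1 i - ξ1 i) * (pLapCoeff n p ξ1 i - pLapCoeff n p ξ1 i)) = (0:ℝ) := by
      simp
    rw [h1, h2, Real.zero_rpow (ne_of_gt (show (0:ℝ) < p/2 by linarith)),
        Real.zero_rpow (ne_of_gt hq0)]
    simp
  have hcoeff : ∀ (ξ : Fin n → ℝ) (i : Fin n),
      pLapCoeff n p ξ i = eucNorm n ξ ^ (p-2) * ξ i := by
    intro ξ i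
    unfold pLapCoeff
    split_ifs with h
    · subst h; simp
    · rfl
  have hα0 : 0 ≤ eucNorm n ξ1 := Real.sqrt_nonneg _
  have hβ0 : 0 ≤ eucNorm n ξ2 := Real.sqrt_nonneg _
  have hα2 : (eucNorm n ξ1)^2 = ∑ i, ξ1 i ^2 :=
    Real.sq_sqrt (Finset.sum_nonneg fun i _ => sq_nonneg _)
  have hβ2 : (eucNorm n ξ2)^2 = ∑ i, ξ2 i ^2 :=
    Real.sq_sqrt (Finset.sum_nonneg fun i _ => sq_nonneg _)
  have hnormzero : ∀ ξ : Fin n → ℝ, eucNorm n ξ = 0 → ξ = 0 := by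
    intro ξ h
    have hsum : (∑ i, ξ i ^2) = 0 :=
      le_antisymm (Real.sqrt_eq_zero'.mp h)
        (Finset.sum_nonneg fun i _ => sq_nonneg _)
    funext i
    have hz := (Finset.sum_eq_zero_iff_of_nonneg
      (fun j _ => sq_nonneg (ξ j))).mp hsum i (Finset.mem_univ i)
    exact pow_eq_zero_iff two_ne_zero |>.mp hz
  have hs : 0 < eucNorm n ξ1 + eucNorm n ξ2 := by
    rcases eq_or_lt_of_le hα0 with h | h
    · rcases eq_or_lt_of_le hβ0 with h' | h'
      · exact absurd (by rw [hnormzero ξ1 h.symm, hnormzero ξ2 h'.symm]) hne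
      · linarith
    · linarith
  have hRdef : (∑ i, (ξ1 i - ξ2 i)^2)
      = (eucNorm n ξ1)^2 + (eucNorm n ξ2)^2 - 2*(∑ i, ξ1 i * ξ2 i) := by
    rw [hα2, hβ2, Finset.mul_sum, ← Finset.sum_add_distrib, ← Finset.sum_sub_distrib]
    exact Finset.sum_congr rfl fun i _ => by ring
  have hR0 : 0 < ∑ i, (ξ1 i - ξ2 i)^2 := by
    obtain ⟨i, hi⟩ := Function.ne_iff.mp hne
    exact Finset.sum_pos' (fun j _ => sq_nonneg _)
      ⟨i, Finset.mem_univ i, by have h := sub_ne_zero.2 hi; positivity⟩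
  have hcs : (∑ i, ξ1 i * ξ2 i)^2 ≤ (eucNorm n ξ1 * eucNorm n ξ2)^2 := by
    have h := Finset.sum_mul_sq_le_sq_mul_sq Finset.univ ξ1 ξ2
    calc (∑ i, ξ1 i * ξ2 i)^2 ≤ (∑ i, ξ1 i ^2) * (∑ i, ξ2 i ^2) := h
      _ = (eucNorm n ξ1 * eucNorm n ξ2)^2 := by rw [← hα2, ← hβ2]; ring
  have hDsum : (∑ i, (pLapCoeff n p ξ1 i - pLapCoeff n p ξ2 i)^2)
      = (eucNorm n ξ1 ^ (p-2))^2*(eucNorm n ξ1)^2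
        - 2*(eucNorm n ξ1 ^ (p-2)*eucNorm n ξ2 ^ (p-2))*(∑ i, ξ1 i * ξ2 i)
        + (eucNorm n ξ2 ^ (p-2))^2*(eucNorm n ξ2)^2 := by
    rw [hα2, hβ2, Finset.mul_sum, Finset.mul_sum, Finset.mul_sum,
        ← Finset.sum_sub_distrib, ← Finset.sum_add_distrib]
    exact Finset.sum_congr rfl fun i _ => by rw [hcoeff, hcoeff]; ring
  have hMsum : (∑ i, (ξ1 i - ξ2 i) * (pLapCoeff n p ξ1 i - pLapCoeff n p ξ2 i))
      = eucNorm n ξ1 ^ (p-2)*(eucNorm n ξ1)^2 + eucNorm n ξ2 ^ (p-2)*(eucNorm n ξ2)^2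
        - (eucNorm n ξ1 ^ (p-2)+eucNorm n ξ2 ^ (p-2))*(∑ i, ξ1 i * ξ2 i) := by
    rw [hα2, hβ2, Finset.mul_sum, Finset.mul_sum, Finset.mul_sum,
        ← Finset.sum_add_distrib, ← Finset.sum_sub_distrib]
    exact Finset.sum_congr rfl fun i _ => by rw [hcoeff, hcoeff]; ring
  rw [hDsum, hMsum]
  exact main_core hp1 hp2 hα0 hβ0 hs hR0 hcs hRdef
end
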